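/- Let A ∈ ℝ^{n×n} be row-stochastic, c, p̄ ∈ ℝ^n nonnegative, and let p* = p*[A,c,p̄] be the unique minimizer over 𝒫_pr(c,p̄) = {p ∈ ℝ^n : 0 ≤ p ≤ p̄, p ≤ c + Aᵀp} of some (equivalently, any) decreasing function f : [0,p̄] → ℝ. Suppose the digraph G[A] has a strongly connected sink component with node set V⁰ ⊊ {1,…,n} such that p̄_i > 0 for all i ∈ V⁰. Then p*_i > 0 for all i ∈ V⁰. -/

import Mathlib

open Matrix Finset

/-- The polytope `𝒫_pr(c, p̄)` of feasible payment vectors under the pro-rata rule: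
`0 ≤ p ≤ p̄` and `p ≤ c + Aᵀp`. -/
def FeasibleVec (n : ℕ) (A : Matrix (Fin n) (Fin n) ℝ) (c pbar p : Fin n → ℝ) : Prop :=
  (∀ i, 0 ≤ p i) ∧ (∀ i, p i ≤ pbar i) ∧ (∀ i, p i ≤ c i + Aᵀ.mulVec p i)

/-- A function `f : [0, p̄] → ℝ` is decreasing: `p ≤ q` with `p ≠ q` implies `f q < f p`. -/
def DecreasingOn (n : ℕ) (pbar : Fin n → ℝ) (f : (Fin n → ℝ) → ℝ) : Prop :=
  ∀ p q : Fin n → ℝ, (∀ i, 0 ≤ p i) → (∀ i, p i ≤ q i) → (∀ i, q i ≤ pbar i) →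
    p ≠ q → f q < f p

/-- Reachability in the weighted digraph `G[A]`, which has an arc `i → j` iff `A i j > 0`. -/
def Reach {n : ℕ} (A : Matrix (Fin n) (Fin n) ℝ) (i j : Fin n) : Prop :=
  Relation.ReflTransGen (fun a b => 0 < A a b) i j

/-- `V0` is a strongly connected component of `G[A]`: it is nonempty, all its nodes are
mutually reachable, and it is maximal with this property. -/
def IsSCC {n : ℕ} (A : Matrix (Fin n) (Fin n) ℝ) (V0 : Set (Fin n)) : Prop :=
  V0.Nonempty ∧ (∀ i ∈ V0, ∀ j ∈ V0, Reach A i j) ∧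
  (∀ i ∈ V0, ∀ j, Reach A i j → Reach A j i → j ∈ V0)

/-- `V0` is a sink in `G[A]`: no arc leaves it. -/
def IsSink {n : ℕ} (A : Matrix (Fin n) (Fin n) ℝ) (V0 : Set (Fin n)) : Prop :=
  ∀ i ∈ V0, ∀ j, 0 < A i j → j ∈ V0

/-!
A minimizer `p*` of a decreasing function over the feasible set is its greatest element, because
the feasible set is closed under `⊔`. Hence `p*` is a fixed point of the clearing map
`p ↦ p̄ ⊓ (c + Aᵀp)`, and positivity of such a fixed point travels along the arcs of `G[A]` into
nodes with `p̄ > 0`; on the sink `V⁰` these are all nodes reachable from any one of them. To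
start the propagation, restrict `A` to `V⁰`: the restriction `B` is row-stochastic, so `Bᵀ` has a
nonzero fixed vector, which may be taken to have a positive entry. Its positive part `u`, extended
by zero, satisfies `u ≤ Aᵀu`, so a small positive multiple of `u` is feasible and therefore lies
below `p*`.
-/

open Filter Topology

section Stochastic

variable {ι : Type*} [Fintype ι]

theorem Matrix.mulVec_mono_of_nonneg {κ : Type*} {M : Matrix κ ι ℝ} (hM : ∀ i j, 0 ≤ M i j)
    {x y : ι → ℝ} (hxy : x ≤ y) : M *ᵥ x ≤ M *ᵥ y :=
  fun i => dotProduct_le_dotProduct_of_nonneg_left hxy fun j => hM i j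

variable [DecidableEq ι] [Nonempty ι] {M : Matrix ι ι ℝ}

theorem Matrix.exists_transpose_mulVec_eq_self_of_mem_rowStochastic
    (hM : M ∈ rowStochastic ℝ ι) : ∃ v : ι → ℝ, Mᵀ *ᵥ v = v ∧ ∃ k, 0 < v k := by
  have hdet : (M - 1).det = 0 := by
    refine exists_mulVec_eq_zero_iff.mp ⟨1, one_ne_zero, ?_⟩
    rw [sub_mulVec, one_vecMul_of_mem_rowStochastic hM, one_mulVec, sub_self]
  obtain ⟨w, hw, hwM⟩ := exists_vecMul_eq_zero_iff.mpr hdet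
  rw [vecMul_sub, vecMul_one, sub_eq_zero, ← mulVec_transpose] at hwM
  obtain ⟨k, hk⟩ := Function.ne_iff.mp hw
  rcases hk.lt_or_gt with hneg | hpos
  · exact ⟨-w, by rw [mulVec_neg, hwM], k, neg_pos.mpr hneg⟩
  · exact ⟨w, hwM, k, hpos⟩

theorem Matrix.exists_le_transpose_mulVec_of_mem_rowStochastic (hM : M ∈ rowStochastic ℝ ι) :
    ∃ u : ι → ℝ, 0 ≤ u ∧ u ≤ Mᵀ *ᵥ u ∧ ∃ k, 0 < u k := by
  obtain ⟨v, hv, k, hk⟩ := exists_transpose_mulVec_eq_self_of_mem_rowStochastic hM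
  have hMT : ∀ i j, 0 ≤ Mᵀ i j := fun i j => hM.1 j i
  refine ⟨v⁺, posPart_nonneg v, sup_le ?_ ?_, k, hk.trans_le (le_posPart v k)⟩
  · calc v = Mᵀ *ᵥ v := hv.symm
      _ ≤ Mᵀ *ᵥ v⁺ := mulVec_mono_of_nonneg hMT (le_posPart v)
  · calc 0 = Mᵀ *ᵥ 0 := (mulVec_zero _).symm
      _ ≤ Mᵀ *ᵥ v⁺ := mulVec_mono_of_nonneg hMT (posPart_nonneg v)

end Stochastic

theorem exists_pos_smul_le {ι : Type*} [Finite ι] {u v : ι → ℝ} (hv0 : 0 ≤ v)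
    (huv : ∀ i, u i ≠ 0 → 0 < v i) : ∃ ε : ℝ, 0 < ε ∧ ε • u ≤ v := by
  have h : ∀ i, ∀ᶠ ε in 𝓝[>] (0 : ℝ), ε * u i ≤ v i := fun i => by
    by_cases hu : u i = 0
    · exact Eventually.of_forall fun ε => by rw [hu, mul_zero]; exact hv0 i
    have hlim : Tendsto (fun ε : ℝ => ε * u i) (𝓝 0) (𝓝 0) := by
      simpa using (continuous_mul_const (u i)).tendsto 0
    exact ((hlim.eventually (gt_mem_nhds (huv i hu))).filter_mono nhdsWithin_le_nhds).mono
      fun _ => le_of_lt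
  obtain ⟨ε, hεu, hε⟩ := ((eventually_all.2 h).and self_mem_nhdsWithin).exists
  exact ⟨ε, hε, hεu⟩

def clearingMap {n : ℕ} (A : Matrix (Fin n) (Fin n) ℝ) (c pbar p : Fin n → ℝ) : Fin n → ℝ :=
  pbar ⊓ (c + Aᵀ *ᵥ p)

section Clearing

variable {n : ℕ} {A : Matrix (Fin n) (Fin n) ℝ} {c pbar p q : Fin n → ℝ}

theorem Matrix.transpose_mulVec_mono_of_nonneg (hA0 : ∀ i j, 0 ≤ A i j) (hpq : p ≤ q) :
    Aᵀ *ᵥ p ≤ Aᵀ *ᵥ q :=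
  mulVec_mono_of_nonneg (fun i j => hA0 j i) hpq

theorem feasibleVec_of_le_transpose_mulVec (hc : 0 ≤ c) (hp0 : 0 ≤ p) (hp : p ≤ pbar)
    (hpA : p ≤ Aᵀ *ᵥ p) : FeasibleVec n A c pbar p :=
  ⟨hp0, hp, fun i => (hpA i).trans (le_add_of_nonneg_left (hc i))⟩

theorem FeasibleVec.sup (hA0 : ∀ i j, 0 ≤ A i j) (hp : FeasibleVec n A c pbar p)
    (hq : FeasibleVec n A c pbar q) : FeasibleVec n A c pbar (p ⊔ q) := by
  refine ⟨fun i => (hp.1 i).trans le_sup_left, fun i => sup_le (hp.2.1 i) (hq.2.1 i),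
    fun i => sup_le ?_ ?_⟩
  · exact (hp.2.2 i).trans (add_le_add le_rfl (transpose_mulVec_mono_of_nonneg hA0 le_sup_left i))
  · exact (hq.2.2 i).trans (add_le_add le_rfl (transpose_mulVec_mono_of_nonneg hA0 le_sup_right i))

theorem FeasibleVec.isGreatest_of_minimizes {f : (Fin n → ℝ) → ℝ} (hA0 : ∀ i j, 0 ≤ A i j)
    (hf : DecreasingOn n pbar f) (hp : FeasibleVec n A c pbar p)
    (hmin : ∀ q, FeasibleVec n A c pbar q → f p ≤ f q) :
    IsGreatest {q | FeasibleVec n A c pbar q} p := by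
  refine ⟨hp, fun q hq => ?_⟩
  have hpq := hp.sup hA0 hq
  by_contra hne
  have hlt := hf p (p ⊔ q) hp.1 (le_sup_left (a := p)) hpq.2.1 fun h => hne (h ▸ le_sup_right)
  exact (hmin _ hpq).not_gt hlt

theorem FeasibleVec.le_clearingMap (hp : FeasibleVec n A c pbar p) : p ≤ clearingMap A c pbar p :=
  fun i => le_inf (hp.2.1 i) (hp.2.2 i)

theorem FeasibleVec.feasibleVec_clearingMap (hA0 : ∀ i j, 0 ≤ A i j)
    (hp : FeasibleVec n A c pbar p) :
    FeasibleVec n A c pbar (clearingMap A c pbar p) := by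
  refine ⟨fun i => (hp.1 i).trans (hp.le_clearingMap i), fun i => inf_le_left, fun i => ?_⟩
  calc clearingMap A c pbar p i ≤ c i + (Aᵀ *ᵥ p) i := inf_le_right
    _ ≤ c i + (Aᵀ *ᵥ clearingMap A c pbar p) i :=
      add_le_add le_rfl (transpose_mulVec_mono_of_nonneg hA0 hp.le_clearingMap i)

theorem IsGreatest.clearingMap_eq (hA0 : ∀ i j, 0 ≤ A i j)
    (hp : IsGreatest {q | FeasibleVec n A c pbar q} p) : clearingMap A c pbar p = p :=
  le_antisymm (hp.2 (hp.1.feasibleVec_clearingMap hA0)) hp.1.le_clearingMap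

theorem pos_of_clearingMap_eq (hA0 : ∀ i j, 0 ≤ A i j) (hc : 0 ≤ c) (hp0 : 0 ≤ p)
    (hfix : clearingMap A c pbar p = p) {k i : Fin n} (hk : 0 < p k) (hki : 0 < A k i)
    (hi : 0 < pbar i) : 0 < p i := by
  have harc : 0 < (Aᵀ *ᵥ p) i := by
    rw [mulVec_transpose]
    exact (mul_pos hk hki).trans_le <| Finset.single_le_sum
      (fun j _ => mul_nonneg (hp0 j) (hA0 j i)) (Finset.mem_univ k)
  rw [← hfix]
  exact lt_inf_iff.mpr ⟨hi, add_pos_of_nonneg_of_pos (hc i) harc⟩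

theorem pos_of_reach_of_clearingMap_eq (hA0 : ∀ i j, 0 ≤ A i j) (hc : 0 ≤ c) (hp0 : 0 ≤ p)
    (hfix : clearingMap A c pbar p = p) {k i : Fin n} (hpbar : ∀ j, Reach A k j → 0 < pbar j)
    (hk : 0 < p k) (hki : Reach A k i) : 0 < p i := by
  induction hki with
  | refl => exact hk
  | tail hkj hji ih => exact pos_of_clearingMap_eq hA0 hc hp0 hfix ih hji (hpbar _ (hkj.tail hji))

end Clearing

section Sink

variable {n : ℕ} {A : Matrix (Fin n) (Fin n) ℝ} {S : Set (Fin n)}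

theorem IsSink.mem_of_reach (hS : IsSink A S) {k i : Fin n} (hk : k ∈ S) (h : Reach A k i) :
    i ∈ S := by
  induction h with
  | refl => exact hk
  | tail _ hji ih => exact hS _ ih _ hji

theorem IsSink.exists_le_transpose_mulVec (hA0 : ∀ i j, 0 ≤ A i j) (hA1 : ∀ i, ∑ j, A i j = 1)
    (hS : IsSink A S) (hne : S.Nonempty) :
    ∃ u : Fin n → ℝ, 0 ≤ u ∧ u ≤ Aᵀ *ᵥ u ∧ (∀ i ∉ S, u i = 0) ∧ ∃ k ∈ S, 0 < u k := by
  classical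
  have : Nonempty S := hne.to_subtype
  set B : Matrix S S ℝ := A.submatrix (↑) (↑)
  have hB : B ∈ rowStochastic ℝ S := by
    refine mem_rowStochastic_iff_sum.2 ⟨fun i j => hA0 _ _, fun i => ?_⟩
    rw [← hA1 i, Finset.sum_congr_set S _ (B i) (fun _ _ => rfl) fun j hj => ?_]
    by_contra h
    exact hj (hS i i.2 j ((hA0 i j).lt_of_ne' h))
  obtain ⟨v, hv0, hvB, k, hk⟩ := exists_le_transpose_mulVec_of_mem_rowStochastic hB
  obtain ⟨u, hu_in, hu_out⟩ : ∃ u : Fin n → ℝ, (∀ i : S, u i = v i) ∧ ∀ i ∉ S, u i = 0 :=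
    ⟨fun i => if h : i ∈ S then v ⟨i, h⟩ else 0, fun i => dif_pos i.2, fun i hi => dif_neg hi⟩
  have hu0 : 0 ≤ u := fun i => by
    by_cases hi : i ∈ S
    · exact (hu_in ⟨i, hi⟩).symm ▸ hv0 _
    · exact (hu_out i hi).symm.le
  refine ⟨u, hu0, fun j => ?_, hu_out, k, k.2, (hu_in k).symm ▸ hk⟩
  by_cases hj : j ∈ S
  · calc u j = v ⟨j, hj⟩ := hu_in ⟨j, hj⟩
      _ ≤ (Bᵀ *ᵥ v) ⟨j, hj⟩ := hvB _
      _ = (Aᵀ *ᵥ u) j := by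
        rw [mulVec_transpose, mulVec_transpose]
        refine (Finset.sum_congr_set S _ _ (fun i hi => ?_) fun i hi => ?_).symm
        · rw [hu_in ⟨i, hi⟩]; rfl
        · rw [hu_out i hi, zero_mul]
  · rw [hu_out j hj]
    simpa using transpose_mulVec_mono_of_nonneg hA0 hu0 j

end Sink

theorem prorata_min_pos_on_sink_general (n : ℕ)
    (A : Matrix (Fin n) (Fin n) ℝ) (hA0 : ∀ i j, 0 ≤ A i j) (hA1 : ∀ i, ∑ j, A i j = 1)
    (c pbar : Fin n → ℝ) (hc : ∀ i, 0 ≤ c i)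
    (f : (Fin n → ℝ) → ℝ) (hf : DecreasingOn n pbar f)
    (pstar : Fin n → ℝ) (hfeas : FeasibleVec n A c pbar pstar)
    (hmin : ∀ q, FeasibleVec n A c pbar q → f pstar ≤ f q)
    (V0 : Set (Fin n)) (hscc : IsSCC A V0) (hsink : IsSink A V0)
    (hpos : ∀ i ∈ V0, 0 < pbar i) :
    ∀ i ∈ V0, 0 < pstar i := by
  have hgreatest := hfeas.isGreatest_of_minimizes hA0 hf hmin
  obtain ⟨u, hu0, hu, hu_out, k, hkV, hk⟩ := hsink.exists_le_transpose_mulVec hA0 hA1 hscc.1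
  obtain ⟨ε, hε, hεu⟩ := exists_pos_smul_le (fun i => (hfeas.1 i).trans (hfeas.2.1 i))
    fun i hi => hpos i (by_contra fun h => hi (hu_out i h))
  have hεu_feas : FeasibleVec n A c pbar (ε • u) := by
    refine feasibleVec_of_le_transpose_mulVec hc (smul_nonneg hε.le hu0) hεu ?_
    rw [mulVec_smul]
    exact smul_le_smul_of_nonneg_left hu hε.le
  have hk_pos : 0 < pstar k := (mul_pos hε hk).trans_le (hgreatest.2 hεu_feas k)
  intro i hi
  exact pos_of_reach_of_clearingMap_eq hA0 hc hfeas.1 (hgreatest.clearingMap_eq hA0)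
    (fun j hj => hpos j (hsink.mem_of_reach hkV hj)) hk_pos (hscc.2.1 k hkV i hi)

/-- If `V⁰ ⊊ {1,…,n}` is the node set of a strongly connected sink component of `G[A]`
with `p̄ᵢ > 0` for all `i ∈ V⁰`, then the minimizer `p*` of any decreasing function over
`𝒫_pr(c, p̄)` satisfies `p*ᵢ > 0` for all `i ∈ V⁰`. -/
theorem prorata_min_pos_on_sink (n : ℕ) (hn : 1 ≤ n)
    (A : Matrix (Fin n) (Fin n) ℝ) (hA0 : ∀ i j, 0 ≤ A i j) (hA1 : ∀ i, ∑ j, A i j = 1)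
    (c pbar : Fin n → ℝ) (hc : ∀ i, 0 ≤ c i) (hpbar : ∀ i, 0 ≤ pbar i)
    (f : (Fin n → ℝ) → ℝ) (hf : DecreasingOn n pbar f)
    (pstar : Fin n → ℝ) (hfeas : FeasibleVec n A c pbar pstar)
    (hmin : ∀ q, FeasibleVec n A c pbar q → f pstar ≤ f q)
    (V0 : Set (Fin n)) (hscc : IsSCC A V0) (hsink : IsSink A V0)
    (hproper : V0 ≠ Set.univ) (hpos : ∀ i ∈ V0, 0 < pbar i) :
    ∀ i ∈ V0, 0 < pstar i :=
  prorata_min_pos_on_sink_general n A hA0 hA1 c pbar hc f hf pstar hfeas hmin V0 hscc hsink hpos
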